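/- arXiv:2504.20390 — 2 statements merged into one kernel-verified Lean document; each statement's English description precedes it below -/
import Mathlib

section
/- Let X = [x_1,...,x_N] with x_i ∈ ℝ^d, G an N×K binary indicator matrix with cluster sizes p_j = Σ_i g_{ij} > 0, and let u_j = (1/p_j) Σ_i g_{ij} x_i be the centroid of cluster j. Define A = G P^{-1/2} where P = diag(p_1,...,p_K), and M = A Aᵀ. Then Σ_{i,j} g_{ij} ‖x_i − u_j‖² = (1/2) Σ_{i,l} ‖x_i − x_l‖² m_{il}. -/
/-!
Within one cluster with weights `w` and centroid `u`, the vectors `x i - u` have weighted sum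
zero, so expanding `‖(x i - u) - (x l - u)‖²` gives the weighted variance identity
`∑ i, w i ‖x i - u‖² = (1 / (2 ∑ w)) ∑ i l, w i w l ‖x i - x l‖²`. Summing over the clusters,
the weights `g i j g l j / p j` add up to the entries of `M = G P⁻¹ Gᵀ`.
-/

open Matrix Finset

section WeightedVariance

variable {ι E : Type*} [Fintype ι] [NormedAddCommGroup E] [InnerProductSpace ℝ E]

theorem sum_sum_mul_norm_sub_sq (w : ι → ℝ) (y : ι → E) :
    ∑ i, ∑ l, w i * w l * ‖y i - y l‖ ^ 2 =
      2 * (∑ i, w i) * ∑ i, w i * ‖y i‖ ^ 2 - 2 * ‖∑ i, w i • y i‖ ^ 2 := by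
  have hcross : ∑ i, ∑ l, w i * w l * inner ℝ (y i) (y l) = ‖∑ i, w i • y i‖ ^ 2 := by
    rw [← real_inner_self_eq_norm_sq, sum_inner]
    simp only [inner_sum, real_inner_smul_left, real_inner_smul_right]
    exact sum_congr rfl fun i _ => sum_congr rfl fun l _ => by ring
  calc ∑ i, ∑ l, w i * w l * ‖y i - y l‖ ^ 2
      = ∑ i, ∑ l, (w l * (w i * ‖y i‖ ^ 2) + w i * (w l * ‖y l‖ ^ 2)
          - 2 * (w i * w l * inner ℝ (y i) (y l))) := by
        refine sum_congr rfl fun i _ => sum_congr rfl fun l _ => ?_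
        rw [norm_sub_sq_real]
        ring
    _ = _ := by
        simp only [sum_add_distrib, sum_sub_distrib, ← mul_sum, ← sum_mul, hcross]
        ring

theorem sum_smul_sub_centroid_eq_zero (w : ι → ℝ) (x : ι → E) (hw : ∑ i, w i ≠ 0) :
    ∑ i, w i • (x i - (∑ l, w l)⁻¹ • ∑ l, w l • x l) = 0 := by
  rw [sum_congr rfl fun i _ => smul_sub (w i) _ _, sum_sub_distrib, ← sum_smul, smul_smul,
    mul_inv_cancel₀ hw, one_smul, sub_self]

theorem sum_mul_norm_sub_centroid_sq (w : ι → ℝ) (x : ι → E) (hw : ∑ i, w i ≠ 0) :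
    ∑ i, w i * ‖x i - (∑ l, w l)⁻¹ • ∑ l, w l • x l‖ ^ 2 =
      (1 / 2) * ∑ i, ∑ l, ‖x i - x l‖ ^ 2 * (w i * w l / ∑ k, w k) := by
  have h := sum_sum_mul_norm_sub_sq w (fun i => x i - (∑ l, w l)⁻¹ • ∑ l, w l • x l)
  simp only [sub_sub_sub_cancel_right, sum_smul_sub_centroid_eq_zero w x hw,
    norm_zero] at h
  have hrhs : ∑ i, ∑ l, ‖x i - x l‖ ^ 2 * (w i * w l / ∑ k, w k) =
      (∑ i, ∑ l, w i * w l * ‖x i - x l‖ ^ 2) / ∑ k, w k := by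
    simp only [sum_div]
    exact sum_congr rfl fun i _ => sum_congr rfl fun l _ => by ring
  rw [hrhs, h]
  field_simp
  ring

end WeightedVariance

theorem mul_diagonal_inv_sqrt_mul_transpose_apply {m n : Type*} [Fintype n] [DecidableEq n]
    (G : Matrix m n ℝ) (p : n → ℝ) (hp : ∀ j, 0 ≤ p j) (i l : m) :
    ((G * diagonal fun j => (√(p j))⁻¹) * (G * diagonal fun j => (√(p j))⁻¹)ᵀ) i l =
      ∑ j, G i j * G l j / p j := by
  rw [mul_apply]
  simp only [transpose_apply, mul_diagonal]
  refine sum_congr rfl fun j _ => ?_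
  rw [mul_mul_mul_comm, ← mul_inv, Real.mul_self_sqrt (hp j), div_eq_mul_inv]

theorem kmeans_eq_manifold_general {N K d : ℕ}
    (x : Fin N → EuclideanSpace ℝ (Fin d))
    (G : Matrix (Fin N) (Fin K) ℝ)
    (p : Fin K → ℝ) (hp : ∀ j, p j = ∑ i, G i j) (hpos : ∀ j, 0 < p j)
    (u : Fin K → EuclideanSpace ℝ (Fin d))
    (hu : ∀ j, u j = (p j)⁻¹ • ∑ i, G i j • x i)
    (A : Matrix (Fin N) (Fin K) ℝ)
    (hA : A = G * Matrix.diagonal fun j => (Real.sqrt (p j))⁻¹)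
    (M : Matrix (Fin N) (Fin N) ℝ) (hM : M = A * Aᵀ) :
    ∑ i, ∑ j, G i j * ‖x i - u j‖ ^ 2 =
      (1 / 2) * ∑ i, ∑ l, ‖x i - x l‖ ^ 2 * M i l := by
  subst hM hA
  have hcluster (j : Fin K) : ∑ i, G i j * ‖x i - u j‖ ^ 2 =
      (1 / 2) * ∑ i, ∑ l, ‖x i - x l‖ ^ 2 * (G i j * G l j / p j) := by
    rw [hu j, hp j]
    exact sum_mul_norm_sub_centroid_sq (G · j) x (hp j ▸ (hpos j).ne')
  calc ∑ i, ∑ j, G i j * ‖x i - u j‖ ^ 2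
      = ∑ j, (1 / 2) * ∑ i, ∑ l, ‖x i - x l‖ ^ 2 * (G i j * G l j / p j) := by
        rw [sum_comm]
        exact sum_congr rfl fun j _ => hcluster j
    _ = (1 / 2) * ∑ i, ∑ l, ‖x i - x l‖ ^ 2 * ∑ j, G i j * G l j / p j := by
        rw [← mul_sum, sum_comm]
        refine congrArg _ (sum_congr rfl fun i _ => ?_)
        rw [sum_comm]
        simp only [mul_sum]
    _ = _ := by simp only [mul_diagonal_inv_sqrt_mul_transpose_apply G p fun j => (hpos j).le]

/-- Theorem 1 of the paper, with the correct factor 1/2: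
for data points `x i ∈ ℝ^d`, a binary indicator matrix `G` with positive cluster
sizes `p j`, centroids `u j = (1 / p j) • ∑ i, g i j • x i`, `A = G P^{-1/2}` and
`M = A Aᵀ`, the K-means objective satisfies
`∑ i j, g i j * ‖x i - u j‖² = (1/2) * ∑ i l, ‖x i - x l‖² * m i l`. -/
theorem kmeans_eq_manifold {N K d : ℕ}
    (x : Fin N → EuclideanSpace ℝ (Fin d))
    (G : Matrix (Fin N) (Fin K) ℝ)
    (hbin : ∀ i j, G i j = 0 ∨ G i j = 1)
    (hrow : ∀ i, ∑ j, G i j = 1)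
    (p : Fin K → ℝ) (hp : ∀ j, p j = ∑ i, G i j) (hpos : ∀ j, 0 < p j)
    (u : Fin K → EuclideanSpace ℝ (Fin d))
    (hu : ∀ j, u j = (p j)⁻¹ • ∑ i, G i j • x i)
    (A : Matrix (Fin N) (Fin K) ℝ)
    (hA : A = G * Matrix.diagonal fun j => (Real.sqrt (p j))⁻¹)
    (M : Matrix (Fin N) (Fin N) ℝ) (hM : M = A * Aᵀ) :
    ∑ i, ∑ j, G i j * ‖x i - u j‖ ^ 2 =
      (1 / 2) * ∑ i, ∑ l, ‖x i - x l‖ ^ 2 * M i l :=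
  kmeans_eq_manifold_general x G p hp hpos u hu A hA M hM
end

section
/- For a square matrix G with SVD G = UΣVᵀ where all singular values are positive, the gradient of ‖G‖_{Sp}^p with respect to G is p·U Σ^{p−1} Vᵀ, i.e., the directional derivative of G ↦ tr((GᵀG)^{p/2}) at G in direction H equals p·tr(V Σ^{p−1} Uᵀ H). -/
/-!
Write `A t = (G + t H)ᵀ (G + t H)`, so that the function is the trace function `tr g(A t)` with
`g x = x ^ (p / 2)`. For a polynomial `g` the derivative `tr (g'(A t) A'(t))` follows from the
product rule and the cyclicity of the trace. Near `t = 0` the spectra of `A t` stay in a fixed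
interval `[a, b]` with `a > 0`, because the trace of `A t` is bounded above and its determinant
bounded below; there `g` is `C¹`, and approximating `g'` uniformly by polynomials and integrating
gives polynomial trace functions whose derivatives converge uniformly, so the formula survives the
limit. Finally `A 0 = V Σ² Vᵀ`, hence `g'(A 0) Gᵀ = (p / 2) V Σ^(p-1) Uᵀ`, and the two terms of
`A'(0) = Hᵀ G + Gᵀ H` contribute equally to the trace.
-/

open Matrix

/-- The `p`-th power of the Schatten p-norm of a real square matrix:
the sum of the `(p/2)`-th powers of the eigenvalues of `MᵀM` (over `ℝ`,
`Mᴴ = Mᵀ`), i.e. `tr((MᵀM)^{p/2}) = ∑ i, σ i ^ p`. -/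
noncomputable def schattenPowSq {n : ℕ} (p : ℝ) (M : Matrix (Fin n) (Fin n) ℝ) : ℝ :=
  ∑ i, ((Matrix.isHermitian_conjTranspose_mul_self M).eigenvalues i) ^ (p / 2)

open Polynomial Filter Set Topology

-- Any norm on matrices gives the same derivatives; this one makes `Matrix` a normed algebra,
-- as the product rule needs.
attribute [local instance] Matrix.linftyOpNormedRing Matrix.linftyOpNormedAlgebra

theorem Polynomial.exists_derivative_eq {K : Type*} [Field K] [CharZero K] (r : K[X]) :
    ∃ P : K[X], derivative P = r := by
  induction r using Polynomial.induction_on' with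
  | add p q hp hq =>
    obtain ⟨P, rfl⟩ := hp
    obtain ⟨Q, rfl⟩ := hq
    exact ⟨P + Q, derivative_add⟩
  | monomial k a =>
    refine ⟨monomial (k + 1) (a / (k + 1)), ?_⟩
    rw [derivative_monomial, Nat.add_sub_cancel]
    congr 1
    push_cast
    field_simp

theorem tendstoUniformlyOn_of_abs_sub_le_div {α : Type*} {F : ℕ → α → ℝ} {f : α → ℝ}
    {s : Set α} (C : ℝ) (h : ∀ m, ∀ x ∈ s, |F m x - f x| ≤ C / (m + 1)) :
    TendstoUniformlyOn F f atTop s := by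
  have hC : Tendsto (fun m : ℕ => C / ((m : ℝ) + 1)) atTop (𝓝 0) := by
    simpa [div_eq_mul_one_div C] using tendsto_one_div_add_atTop_nhds_zero_nat.const_mul C
  rw [Metric.tendstoUniformlyOn_iff]
  intro ε hε
  filter_upwards [hC.eventually (gt_mem_nhds hε)] with m hm x hx
  rw [dist_comm, Real.dist_eq]
  exact (h m x hx).trans_lt hm

theorem exists_polynomial_tendstoUniformlyOn_and_derivative {a b : ℝ} {g g' : ℝ → ℝ}
    (hg : ∀ x ∈ Icc a b, HasDerivWithinAt g (g' x) (Icc a b) x)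
    (hg' : ContinuousOn g' (Icc a b)) :
    ∃ Q : ℕ → ℝ[X], TendstoUniformlyOn (fun m x => (Q m).eval x) g atTop (Icc a b) ∧
      TendstoUniformlyOn (fun m x => (derivative (Q m)).eval x) g' atTop (Icc a b) := by
  have hε : ∀ m : ℕ, (0 : ℝ) < 1 / (m + 1) := fun m => by positivity
  choose r hr using fun m => exists_polynomial_near_of_continuousOn a b g' hg' _ (hε m)
  choose P hP using fun m => (r m).exists_derivative_eq
  set Q : ℕ → ℝ[X] := fun m => P m + C (g a - (P m).eval a)
  have hQ' : ∀ m, derivative (Q m) = r m := fun m => by simp [Q, hP]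
  have hQa : ∀ m, (Q m).eval a = g a := fun m => by simp [Q]
  refine ⟨Q, tendstoUniformlyOn_of_abs_sub_le_div (b - a) fun m x hx => ?_,
    tendstoUniformlyOn_of_abs_sub_le_div 1 fun m x hx => ?_⟩
  · have ha : a ∈ Icc a b := left_mem_Icc.mpr (hx.1.trans hx.2)
    have hmvt := (convex_Icc a b).norm_image_sub_le_of_norm_hasDerivWithin_le
      (f := fun y => (Q m).eval y - g y)
      (fun y hy => ((Q m).hasDerivAt y).hasDerivWithinAt.sub (hg y hy))
      (fun y hy => by rw [hQ', Real.norm_eq_abs]; exact (hr m y hy).le) ha hx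
    rw [hQa, sub_self, sub_zero, Real.norm_eq_abs, Real.norm_eq_abs,
      abs_of_nonneg (sub_nonneg.mpr hx.1)] at hmvt
    calc |(Q m).eval x - g x| ≤ 1 / (m + 1) * (x - a) := hmvt
      _ ≤ 1 / (m + 1) * (b - a) := by gcongr; exact hx.2
      _ = (b - a) / (m + 1) := by ring
  · rw [hQ']
    exact (hr m x hx).le

theorem div_pow_card_sub_one_le_of_le_prod {ι : Type*} [Fintype ι] {μ : ι → ℝ} {K c : ℝ}
    (hμ : ∀ i, 0 ≤ μ i) (hsum : ∑ i, μ i ≤ K) (hprod : c ≤ ∏ i, μ i) (i : ι) :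
    c / K ^ (Fintype.card ι - 1) ≤ μ i := by
  classical
  have hle : ∀ j, μ j ≤ K := fun j =>
    (Finset.single_le_sum (fun k _ => hμ k) (Finset.mem_univ j)).trans hsum
  have hrest : ∏ j ∈ Finset.univ.erase i, μ j ≤ K ^ (Fintype.card ι - 1) :=
    calc ∏ j ∈ Finset.univ.erase i, μ j ≤ ∏ _j ∈ Finset.univ.erase i, K :=
          Finset.prod_le_prod (fun j _ => hμ j) fun j _ => hle j
      _ = K ^ (Fintype.card ι - 1) := by
          rw [Finset.prod_const, Finset.card_erase_of_mem (Finset.mem_univ i), Finset.card_univ]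
  rcases (pow_nonneg ((hμ i).trans (hle i)) (Fintype.card ι - 1)).eq_or_lt with h0 | hpos
  · rw [← h0, div_zero]
    exact hμ i
  rw [div_le_iff₀ hpos]
  calc c ≤ μ i * ∏ j ∈ Finset.univ.erase i, μ j := by
        rwa [Finset.mul_prod_erase _ _ (Finset.mem_univ i)]
    _ ≤ μ i * K ^ (Fintype.card ι - 1) := mul_le_mul_of_nonneg_left hrest (hμ i)

variable {ι : Type*} [Fintype ι]

theorem Matrix.trace_mul_transpose_add_self {P : Matrix ι ι ℝ} (hP : Pᵀ = P)
    (M : Matrix ι ι ℝ) : trace (P * (Mᵀ + M)) = 2 * trace (P * M) := by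
  rw [Matrix.mul_add, trace_add, ← trace_transpose (P * Mᵀ), transpose_mul, transpose_transpose,
    hP, trace_mul_comm M, two_mul]

variable [DecidableEq ι]

section Derivatives

variable {𝕜 : Type*} [NontriviallyNormedField 𝕜] [CompleteSpace 𝕜]
  {A : 𝕜 → Matrix ι ι 𝕜} {B : Matrix ι ι 𝕜} {t : 𝕜}

theorem HasDerivAt.matrix_trace (hA : HasDerivAt A B t) :
    HasDerivAt (fun s => trace (A s)) (trace B) t :=
  (traceLinearMap ι 𝕜 𝕜).toContinuousLinearMap.hasFDerivAt.comp_hasDerivAt t hA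

theorem HasDerivAt.matrix_trace_pow (hA : HasDerivAt A B t) (k : ℕ) :
    HasDerivAt (fun s => trace (A s ^ k)) (k * trace (A t ^ (k - 1) * B)) t := by
  convert (hA.fun_pow' k).matrix_trace using 1
  rw [trace_sum, Finset.sum_congr rfl fun i hi => ?_, Finset.sum_const, Finset.card_range,
    nsmul_eq_mul]
  rw [trace_mul_cycle, ← pow_add, Nat.pred_eq_sub_one,
    Nat.add_sub_cancel' (Nat.le_sub_one_of_lt (Finset.mem_range.mp hi))]

theorem HasDerivAt.matrix_trace_aeval (hA : HasDerivAt A B t) (q : 𝕜[X]) :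
    HasDerivAt (fun s => trace (aeval (A s) q)) (trace (aeval (A t) (derivative q) * B)) t := by
  induction q using Polynomial.induction_on' with
  | add p q hp hq =>
    simp only [map_add, trace_add, Matrix.add_mul]
    exact hp.add hq
  | monomial k a =>
    simp only [aeval_monomial, derivative_monomial, Algebra.algebraMap_eq_smul_one, smul_one_mul,
      Matrix.smul_mul, trace_smul, smul_eq_mul]
    exact ((hA.matrix_trace_pow k).const_mul a).congr_deriv (by ring)

end Derivatives

theorem Matrix.hasDerivAt_conjTranspose_mul_self_add_smul (G H : Matrix ι ι ℝ) (t : ℝ) :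
    HasDerivAt (fun s : ℝ => (G + s • H)ᴴ * (G + s • H))
      (Hᴴ * (G + t • H) + (G + t • H)ᴴ * H) t := by
  have hM : HasDerivAt (fun s : ℝ => G + s • H) H t :=
    (((hasDerivAt_id' t).smul_const H).const_add G).congr_deriv (one_smul _ _)
  have hMt : HasDerivAt (fun s : ℝ => (G + s • H)ᴴ) Hᴴ t := by
    simp only [conjTranspose_add, conjTranspose_smul, star_trivial]
    exact (((hasDerivAt_id' t).smul_const Hᴴ).const_add Gᴴ).congr_deriv (one_smul _ _)
  exact hMt.mul hM

namespace Matrix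

theorem IsHermitian.trace_cfc {A : Matrix ι ι ℝ} (hA : A.IsHermitian) (f : ℝ → ℝ) :
    trace (cfc f A) = ∑ i, f (hA.eigenvalues i) := by
  rw [hA.cfc_eq, IsHermitian.cfc, Unitary.conjStarAlgAut_apply, trace_mul_cycle,
    Unitary.coe_star_mul_self, Matrix.one_mul, trace_diagonal]
  simp

theorem IsHermitian.trace_cfc_mul {A : Matrix ι ι ℝ} (hA : A.IsHermitian) (f : ℝ → ℝ)
    (B : Matrix ι ι ℝ) :
    trace (cfc f A * B) = ∑ i, f (hA.eigenvalues i) *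
      (star (hA.eigenvectorUnitary : Matrix ι ι ℝ) * B * hA.eigenvectorUnitary) i i := by
  set W : Matrix ι ι ℝ := ↑hA.eigenvectorUnitary
  rw [hA.cfc_eq, IsHermitian.cfc, Unitary.conjStarAlgAut_apply,
    show ∀ D : Matrix ι ι ℝ, W * D * star W * B = W * (D * (star W * B)) from
      fun D => by simp only [Matrix.mul_assoc],
    trace_mul_comm, Matrix.mul_assoc]
  simp [trace, diagonal_mul]

theorem abs_diag_star_mul_mul_le {W : Matrix ι ι ℝ} (hW : W ∈ unitaryGroup ι ℝ)
    (B : Matrix ι ι ℝ) (i : ι) : |(star W * B * W) i i| ≤ ∑ j, ∑ k, |B j k| := by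
  have hW1 : ∀ j k, |W j k| ≤ 1 := fun j k => by
    simpa using entry_norm_bound_of_unitary hW j k
  simp only [mul_apply, star_apply, Finset.sum_mul]
  rw [Finset.sum_comm]
  refine (Finset.abs_sum_le_sum_abs _ _).trans (Finset.sum_le_sum fun j _ => ?_)
  refine (Finset.abs_sum_le_sum_abs _ _).trans (Finset.sum_le_sum fun k _ => ?_)
  simp only [abs_mul, star_trivial]
  calc |W j i| * |B j k| * |W k i| ≤ 1 * |B j k| * 1 := by gcongr <;> exact hW1 _ _
    _ = |B j k| := by ring

theorem IsHermitian.abs_trace_cfc_mul_sub_le {A : Matrix ι ι ℝ} (hA : A.IsHermitian)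
    (B : Matrix ι ι ℝ) {f₁ f₂ : ℝ → ℝ} {δ : ℝ}
    (h : ∀ i, |f₁ (hA.eigenvalues i) - f₂ (hA.eigenvalues i)| ≤ δ) :
    |trace (cfc f₁ A * B) - trace (cfc f₂ A * B)| ≤
      δ * (Fintype.card ι * ∑ j, ∑ k, |B j k|) := by
  rw [hA.trace_cfc_mul, hA.trace_cfc_mul, ← Finset.sum_sub_distrib]
  calc _ ≤ ∑ i, |f₁ (hA.eigenvalues i) - f₂ (hA.eigenvalues i)| *
          |(star (hA.eigenvectorUnitary : Matrix ι ι ℝ) * B * hA.eigenvectorUnitary) i i| := by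
        refine (Finset.abs_sum_le_sum_abs _ _).trans_eq (Finset.sum_congr rfl fun i _ => ?_)
        rw [← sub_mul, abs_mul]
    _ ≤ ∑ _i : ι, δ * ∑ j, ∑ k, |B j k| :=
        Finset.sum_le_sum fun i _ => mul_le_mul (h i)
          (abs_diag_star_mul_mul_le hA.eigenvectorUnitary.2 B i) (abs_nonneg _)
          ((abs_nonneg _).trans (h i))
    _ = δ * (Fintype.card ι * ∑ j, ∑ k, |B j k|) := by
        rw [Finset.sum_const, Finset.card_univ, nsmul_eq_mul]
        ring

theorem cfc_diagonal (d : ι → ℝ) (f : ℝ → ℝ) : cfc f (diagonal d) = diagonal (f ∘ d) := by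
  obtain ⟨q, hq⟩ : ∃ q : ℝ[X], ∀ i, q.eval (d i) = f (d i) :=
    ⟨Lagrange.interpolate (Finset.univ.image d) id f, fun i =>
      Lagrange.eval_interpolate_at_node f (Set.injOn_id _)
        (Finset.mem_image_of_mem d (Finset.mem_univ i))⟩
  have hd : IsSelfAdjoint (diagonal d) := isHermitian_diagonal d
  calc cfc f (diagonal d) = cfc q.eval (diagonal d) := by
        refine cfc_congr ?_
        rw [spectrum_diagonal]
        rintro _ ⟨i, rfl⟩
        exact (hq i).symm
    _ = aeval (diagonal d) q := cfc_polynomial q _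
    _ = diagonal (f ∘ d) := by
        change aeval (diagonalAlgHom ℝ d) q = _
        rw [aeval_algHom_apply, aeval_pi_apply]
        simp [hq]

theorem cfc_conj_diagonal {W : Matrix ι ι ℝ} (hW : Wᵀ * W = 1) (d : ι → ℝ) (f : ℝ → ℝ) :
    cfc f (W * diagonal d * Wᵀ) = W * diagonal (f ∘ d) * Wᵀ := by
  have hWu : W ∈ unitary (Matrix ι ι ℝ) := by
    rw [Unitary.mem_iff, star_eq_conjTranspose, conjTranspose_eq_transpose_of_trivial]
    exact ⟨hW, mul_eq_one_comm.mp hW⟩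
  set φ := Unitary.conjStarAlgAut ℝ (Matrix ι ι ℝ) ⟨W, hWu⟩
  have hφ : ⇑φ = fun M => W * M * Wᵀ := funext fun M => by
    simp [φ, star_eq_conjTranspose]
  have hd : IsSelfAdjoint (diagonal d) := isHermitian_diagonal d
  have := StarAlgHomClass.map_cfc φ f (diagonal d)
    (by rw [spectrum_diagonal]; exact (Set.finite_range d).continuousOn f)
    (by rw [hφ]; fun_prop) hd (hd.map φ)
  rw [hφ, cfc_diagonal] at this
  exact this.symm

theorem eventually_spectrum_subset_Icc {X : Type*} [TopologicalSpace X]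
    {A : X → Matrix ι ι ℝ} {x₀ : X} (hA : ∀ x, (A x).PosSemidef) (hcont : ContinuousAt A x₀)
    (hA₀ : (A x₀).PosDef) :
    ∃ a > 0, ∃ b, ∀ᶠ x in 𝓝 x₀, spectrum ℝ (A x) ⊆ Icc a b := by
  set K := trace (A x₀) + 1
  set c := det (A x₀) / 2
  have hK : 0 < K := by have := hA₀.posSemidef.trace_nonneg; positivity
  have hc : 0 < c := half_pos hA₀.det_pos
  have htrace : ∀ᶠ x in 𝓝 x₀, trace (A x) < K :=
    (continuous_id.matrix_trace.continuousAt.comp hcont).eventually (gt_mem_nhds (lt_add_one _))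
  have hdet : ∀ᶠ x in 𝓝 x₀, c < det (A x) :=
    (continuous_id.matrix_det.continuousAt.comp hcont).eventually
      (lt_mem_nhds (half_lt_self hA₀.det_pos))
  refine ⟨c / K ^ (Fintype.card ι - 1), by positivity, K, ?_⟩
  filter_upwards [htrace, hdet] with x hxK hxc
  have hH := (hA x).isHermitian
  rw [hH.spectrum_real_eq_range_eigenvalues]
  rintro _ ⟨i, rfl⟩
  have hsum : ∑ j, hH.eigenvalues j ≤ K := by
    have := hH.trace_eq_sum_eigenvalues
    simp only [RCLike.ofReal_real_eq_id, id] at this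
    linarith
  have hprod : c ≤ ∏ j, hH.eigenvalues j := by
    have := hH.det_eq_prod_eigenvalues
    simp only [RCLike.ofReal_real_eq_id, id] at this
    linarith
  exact ⟨div_pow_card_sub_one_le_of_le_prod (hA x).eigenvalues_nonneg hsum hprod i,
    (Finset.single_le_sum (fun j _ => (hA x).eigenvalues_nonneg j) (Finset.mem_univ i)).trans
      hsum⟩

theorem hasDerivAt_trace_cfc {A B : ℝ → Matrix ι ι ℝ} {t₀ a b : ℝ} {g g' : ℝ → ℝ}
    (hA : ∀ t, (A t).IsHermitian) (hderiv : ∀ᶠ t in 𝓝 t₀, HasDerivAt A (B t) t)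
    (hB : ContinuousAt B t₀) (hspec : ∀ᶠ t in 𝓝 t₀, spectrum ℝ (A t) ⊆ Icc a b)
    (hg : ∀ x ∈ Icc a b, HasDerivWithinAt g (g' x) (Icc a b) x)
    (hg' : ContinuousOn g' (Icc a b)) :
    HasDerivAt (fun t => trace (cfc g (A t))) (trace (cfc g' (A t₀) * B t₀)) t₀ := by
  obtain ⟨Q, hQ, hQ'⟩ := exists_polynomial_tendstoUniformlyOn_and_derivative hg hg'
  have heig : ∀ᶠ t in 𝓝 t₀, ∀ i, (hA t).eigenvalues i ∈ Icc a b :=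
    hspec.mono fun t ht i => ht ((hA t).eigenvalues_mem_spectrum_real i)
  set D := Fintype.card ι * (∑ j, ∑ k, |B t₀ j k| + 1)
  have hBD : ∀ᶠ t in 𝓝 t₀, Fintype.card ι * ∑ j, ∑ k, |B t j k| ≤ D := by
    have hcont : Continuous fun M : Matrix ι ι ℝ => ∑ j, ∑ k, |M j k| := by fun_prop
    filter_upwards [(hcont.continuousAt.comp hB).eventually (gt_mem_nhds (lt_add_one _))]
      with t ht
    exact mul_le_mul_of_nonneg_left ht.le (Nat.cast_nonneg _)
  have haeval : ∀ q : ℝ[X], ∀ t, aeval (A t) q = cfc q.eval (A t) := fun q t =>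
    (cfc_polynomial q (A t) (hA t)).symm
  refine hasDerivAt_of_tendstoUniformlyOnFilter (l := atTop)
    (g' := fun t => trace (cfc g' (A t) * B t))
    (f := fun m t => trace (aeval (A t) (Q m)))
    (f' := fun m t => trace (aeval (A t) (derivative (Q m)) * B t)) ?_ ?_ ?_
  · rw [Metric.tendstoUniformlyOnFilter_iff]
    intro ε hε
    have hδ : 0 < ε / (D + 1) := by positivity
    filter_upwards [(Metric.tendstoUniformlyOn_iff.mp hQ' _ hδ).prod_mk (heig.and hBD)]
      with ⟨m, t⟩ ⟨hm, ht, htD⟩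
    rw [haeval, Real.dist_eq]
    calc _ ≤ ε / (D + 1) * (Fintype.card ι * ∑ j, ∑ k, |B t j k|) :=
          (hA t).abs_trace_cfc_mul_sub_le _ fun i => by
            rw [← Real.dist_eq]
            exact (hm _ (ht i)).le
      _ ≤ ε / (D + 1) * D := by gcongr
      _ < ε := by
          rw [div_mul_eq_mul_div, div_lt_iff₀ (by positivity)]
          nlinarith
  · exact hderiv.prod_inr _ |>.mono fun _ h => h.matrix_trace_aeval _
  · filter_upwards [heig] with t ht
    simp only [haeval, (hA t).trace_cfc]
    exact tendsto_finsetSum _ fun i _ => hQ.tendsto_at (ht i)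

theorem mul_diagonal_mul_transpose_mul_mul_diagonal_mul {W X Y : Matrix ι ι ℝ}
    (hX : Xᵀ * X = 1) (d e : ι → ℝ) :
    W * diagonal d * Xᵀ * (X * diagonal e * Y) = W * diagonal (d * e) * Y := by
  calc W * diagonal d * Xᵀ * (X * diagonal e * Y) = W * diagonal d * (Xᵀ * X) * diagonal e * Y := by
        simp only [Matrix.mul_assoc]
    _ = W * diagonal (d * e) * Y := by
        rw [hX, Matrix.mul_one, Matrix.mul_assoc W, diagonal_mul_diagonal]
        rfl

theorem trace_cfc_mul_transpose_mul_add_of_svd {G U V : Matrix ι ι ℝ} {σ : ι → ℝ}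
    (hσ : ∀ i, 0 < σ i) (hU : Uᵀ * U = 1) (hV : Vᵀ * V = 1) (hSVD : G = U * diagonal σ * Vᵀ)
    (p : ℝ) (H : Matrix ι ι ℝ) :
    trace (cfc (fun x => p / 2 * x ^ (p / 2 - 1)) (Gᵀ * G) * (Hᵀ * G + Gᵀ * H)) =
      p * trace (V * diagonal (fun i => σ i ^ (p - 1)) * Uᵀ * H) := by
  set P := V * diagonal (fun i => σ i ^ (p - 2)) * Vᵀ
  have hGt : Gᵀ = V * diagonal σ * Uᵀ := by
    simp [hSVD, transpose_mul, Matrix.mul_assoc]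
  have hGtG : Gᵀ * G = V * diagonal (fun i => σ i ^ 2) * Vᵀ := by
    rw [hGt, hSVD, mul_diagonal_mul_transpose_mul_mul_diagonal_mul hU]
    simp only [← sq]
    rfl
  have hcfc : cfc (fun x => p / 2 * x ^ (p / 2 - 1)) (Gᵀ * G) = (p / 2) • P := by
    have hpow : ((fun x => p / 2 * x ^ (p / 2 - 1)) ∘ fun i => σ i ^ 2) =
        (p / 2) • fun i => σ i ^ (p - 2) := funext fun i => by
      simp only [Function.comp_apply, Pi.smul_apply, smul_eq_mul]
      rw [← Real.rpow_natCast, ← Real.rpow_mul (hσ i).le]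
      ring_nf
    rw [hGtG, cfc_conj_diagonal hV, hpow, diagonal_smul, Matrix.mul_smul, Matrix.smul_mul]
  have hPG : P * Gᵀ = V * diagonal (fun i => σ i ^ (p - 1)) * Uᵀ := by
    have hpow : (fun i => σ i ^ (p - 2)) * σ = fun i => σ i ^ (p - 1) := funext fun i => by
      rw [Pi.mul_apply, ← Real.rpow_add_one (hσ i).ne']
      ring_nf
    rw [hGt, mul_diagonal_mul_transpose_mul_mul_diagonal_mul hV, hpow]
  have hP : Pᵀ = P := by simp [P, Matrix.mul_assoc]
  rw [hcfc, show Hᵀ * G = (Gᵀ * H)ᵀ by rw [transpose_mul, transpose_transpose], smul_mul,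
    trace_smul, trace_mul_transpose_add_self hP, ← Matrix.mul_assoc, hPG, smul_eq_mul]
  ring

end Matrix

theorem schatten_pow_gradient_general {n : ℕ}
    (G U V : Matrix (Fin n) (Fin n) ℝ) (σ : Fin n → ℝ) (hσ : ∀ i, 0 < σ i)
    (hU : Uᵀ * U = 1) (hV : Vᵀ * V = 1)
    (hSVD : G = U * Matrix.diagonal σ * Vᵀ)
    (hG : IsUnit G)
    (p : ℝ) :
    ∀ H : Matrix (Fin n) (Fin n) ℝ,
      HasDerivAt (fun t : ℝ => schattenPowSq p (G + t • H))
        (p * Matrix.trace (V * Matrix.diagonal (fun i => σ i ^ (p - 1)) * Uᵀ * H))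
        0 := by
  intro H
  have hA : ∀ t : ℝ, ((G + t • H)ᴴ * (G + t • H)).IsHermitian := fun t =>
    isHermitian_conjTranspose_mul_self _
  have hderiv := hasDerivAt_conjTranspose_mul_self_add_smul G H
  obtain ⟨a, ha, b, hspec⟩ := eventually_spectrum_subset_Icc
    (fun t => posSemidef_conjTranspose_mul_self (G + t • H)) (hderiv 0).continuousAt
    (by simpa using PosDef.conjTranspose_mul_self G (mulVec_injective_iff_isUnit.mpr hG))
  have key := hasDerivAt_trace_cfc hA (.of_forall hderiv) (by fun_prop) hspec
    (g := fun x => x ^ (p / 2)) (g' := fun x => p / 2 * x ^ (p / 2 - 1))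
    (fun x hx => (Real.hasDerivAt_rpow_const (Or.inl (ha.trans_le hx.1).ne')).hasDerivWithinAt)
    (fun x hx => (continuousAt_const.mul
      (Real.continuousAt_rpow_const _ _ (Or.inl (ha.trans_le hx.1).ne'))).continuousWithinAt)
  simp only [(hA _).trace_cfc] at key
  refine key.congr_deriv ?_
  simp only [zero_smul, add_zero, conjTranspose_eq_transpose_of_trivial]
  exact trace_cfc_mul_transpose_mul_add_of_svd hσ hU hV hSVD p H

/-- For an invertible square `G` with SVD `G = U Σ Vᵀ` (all singular
values positive) and `p > 1`, the directional derivative of `M ↦ tr((MᵀM)^{p/2})`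
at `G` in direction `H` equals `p * tr(V Σ^{p-1} Uᵀ H)`; i.e. the gradient of
`‖G‖_{Sp}^p` is `p U Σ^{p-1} Vᵀ`. -/
theorem schatten_pow_gradient {n : ℕ}
    (G U V : Matrix (Fin n) (Fin n) ℝ) (σ : Fin n → ℝ) (hσ : ∀ i, 0 < σ i)
    (hU : Uᵀ * U = 1) (hV : Vᵀ * V = 1)
    (hSVD : G = U * Matrix.diagonal σ * Vᵀ)
    (hG : IsUnit G)
    (p : ℝ) (hp : 1 < p) :
    ∀ H : Matrix (Fin n) (Fin n) ℝ,
      HasDerivAt (fun t : ℝ => schattenPowSq p (G + t • H))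
        (p * Matrix.trace (V * Matrix.diagonal (fun i => σ i ^ (p - 1)) * Uᵀ * H))
        0 :=
  schatten_pow_gradient_general G U V σ hσ hU hV hSVD hG p
end
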